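/- arXiv:1304.3040 — 2 statements merged into one kernel-verified Lean document; each statement's English description precedes it below -/
import Mathlib

section
/- For a grafting function φ : [0,s_0] → [0,s_1] with data (X^±, δ^±), a point t ∈ (0, s_0) belongs to X^+ if and only if the right jump ω^+(t) = lim_{h→0+} (φ(t+h) − φ(t)) is positive, in which case δ^+(t) = ω^+(t); similarly t ∈ X^- if and only if the left jump ω^-(t) = lim_{h→0+} (φ(t) − φ(t−h)) is positive, in which case δ^-(t) = ω^-(t). Consequently the data (X^±, δ^±) is uniquely determined by φ. -/
open Set Filter

/-- `(Xp, Xm, δp, δm)` is grafting data for `φ : [0, s₀] → [0, s₁]`: `Xp ⊆ [0, s₀)` and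
`Xm ⊆ [0, s₀]` are countable, `δp, δm` are positive and summable on them, and
`φ(t) = t + ∑_{x < t, x ∈ Xp} δp(x) + ∑_{x ≤ t, x ∈ Xm} δm(x)` for `t ∈ [0, s₀]`,
with `φ` mapping `[0, s₀]` into `[0, s₁]`. -/
def IsGraftingData (s₀ s₁ : ℝ) (φ : ℝ → ℝ) (Xp Xm : Set ℝ) (δp δm : ℝ → ℝ) : Prop :=
  Xp.Countable ∧ Xm.Countable ∧
  Xp ⊆ Ico 0 s₀ ∧ Xm ⊆ Icc 0 s₀ ∧
  (∀ x ∈ Xp, 0 < δp x) ∧ (∀ x ∈ Xm, 0 < δm x) ∧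
  Summable (fun x : Xp => δp x) ∧ Summable (fun x : Xm => δm x) ∧
  (∀ t ∈ Icc 0 s₀,
    φ t = t + (∑' x : ↥(Xp ∩ Iio t), δp x) + (∑' x : ↥(Xm ∩ Iic t), δm x)) ∧
  (∀ t ∈ Icc 0 s₀, φ t ∈ Icc 0 s₁)

/-
Writing the sum over `X ∩ A` as the sum over `X` of the indicator of `A`, dominated convergence
for series shows that these sums depend continuously on `A` under pointwise convergence of
indicators. As `u → t⁺` both `Iio u` and `Iic u` converge pointwise to `Iic t`, and as `u → t⁻`
both converge to `Iio t`. So the right jump of `φ` at `t` is the sum over `Xp ∩ Iic t` minus the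
sum over `Xp ∩ Iio t`, that is `δp t` or `0` according as `t ∈ Xp`, and the left jump is likewise
`δm t` or `0`; positivity of `δ±` then identifies `X±`.
-/

open Topology

section Monoid

variable {α M : Type*} [AddCommMonoid M] [TopologicalSpace M]

theorem tsum_inter_eq_tsum_indicator (S A : Set α) (f : α → M) :
    ∑' x : ↥(S ∩ A), f x = ∑' x : S, A.indicator f x := by
  rw [tsum_subtype, tsum_subtype S, indicator_indicator]

theorem tsum_indicator_singleton (S : Set α) (f : α → M) (a : α) :
    ∑' x : S, ({a} : Set α).indicator f x = S.indicator f a := by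
  rw [tsum_subtype S, indicator_indicator, inter_comm, ← indicator_indicator, ← tsum_subtype,
    tsum_singleton]

end Monoid

section Normed

variable {α E : Type*} [NormedAddCommGroup E] {S : Set α} {f : α → E}

theorem tendsto_tsum_inter_of_eventually_mem_iff [CompleteSpace E] {ι : Type*} {l : Filter ι}
    {A : ι → Set α} {B : Set α} (hf : Summable fun x : S => ‖f x‖)
    (hA : ∀ x, ∀ᶠ i in l, x ∈ A i ↔ x ∈ B) :
    Tendsto (fun i => ∑' x : ↥(S ∩ A i), f x) l (𝓝 (∑' x : ↥(S ∩ B), f x)) := by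
  classical
  simp only [tsum_inter_eq_tsum_indicator]
  refine tendsto_tsum_of_dominated_convergence hf (fun x => ?_)
    (.of_forall fun i x => norm_indicator_le_norm_self _ _)
  refine tendsto_const_nhds.congr' ?_
  filter_upwards [hA x] with i hi
  rw [indicator_apply, indicator_apply, hi]

theorem summable_indicator_of_summable_norm [CompleteSpace E] (hf : Summable fun x : S => ‖f x‖)
    (A : Set α) : Summable fun x : S => A.indicator f x :=
  .of_norm_bounded hf fun _ => norm_indicator_le_norm_self _ _

theorem tsum_inter_Iic_sub_tsum_inter_Iio [LinearOrder α] [CompleteSpace E]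
    (hf : Summable fun x : S => ‖f x‖) (a : α) :
    ∑' x : ↥(S ∩ Iic a), f x - ∑' x : ↥(S ∩ Iio a), f x = S.indicator f a := by
  rw [tsum_inter_eq_tsum_indicator, tsum_inter_eq_tsum_indicator,
    ← (summable_indicator_of_summable_norm hf _).tsum_sub
      (summable_indicator_of_summable_norm hf _), ← tsum_indicator_singleton S f a,
    ← Iic_sdiff_Iio_same, indicator_sdiff' Iio_subset_Iic_self]
  simp only [Pi.add_apply, Pi.neg_apply, sub_eq_add_neg]

end Normed

section OrderTopology

variable {α : Type*} [LinearOrder α] [TopologicalSpace α] [OrderTopology α] (a x : α)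

theorem eventually_lt_iff_le_nhdsGT : ∀ᶠ u in 𝓝[>] a, x < u ↔ x ≤ a := by
  rcases le_or_gt x a with hx | hx
  · filter_upwards [self_mem_nhdsWithin] with u hu
    exact iff_of_true (hx.trans_lt hu) hx
  · filter_upwards [Ioo_mem_nhdsGT hx] with u hu
    exact iff_of_false hu.2.asymm hx.not_ge

theorem eventually_le_iff_le_nhdsGT : ∀ᶠ u in 𝓝[>] a, x ≤ u ↔ x ≤ a := by
  rcases le_or_gt x a with hx | hx
  · filter_upwards [self_mem_nhdsWithin] with u hu
    exact iff_of_true (hx.trans hu.le) hx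
  · filter_upwards [Ioo_mem_nhdsGT hx] with u hu
    exact iff_of_false hu.2.not_ge hx.not_ge

theorem eventually_lt_iff_lt_nhdsLT : ∀ᶠ u in 𝓝[<] a, x < u ↔ x < a := by
  rcases lt_or_ge x a with hx | hx
  · filter_upwards [Ioo_mem_nhdsLT hx] with u hu
    exact iff_of_true hu.1 hx
  · filter_upwards [self_mem_nhdsWithin] with u hu
    exact iff_of_false (hu.trans_le hx).not_gt hx.not_gt

theorem eventually_le_iff_lt_nhdsLT : ∀ᶠ u in 𝓝[<] a, x ≤ u ↔ x < a := by
  rcases lt_or_ge x a with hx | hx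
  · filter_upwards [Ioo_mem_nhdsLT hx] with u hu
    exact iff_of_true hu.1.le hx
  · filter_upwards [self_mem_nhdsWithin] with u hu
    exact iff_of_false (hu.trans_le hx).not_ge hx.not_gt

end OrderTopology

section OrderedGroup

variable {G : Type*} [AddCommGroup G] [LinearOrder G] [IsOrderedAddMonoid G] [TopologicalSpace G]
  [IsTopologicalAddGroup G] (t : G)

theorem tendsto_const_add_nhdsGT_zero : Tendsto (t + ·) (𝓝[>] 0) (𝓝[>] t) := by
  refine tendsto_nhdsWithin_of_tendsto_nhds_of_eventually_within _ ?_
    (eventually_nhdsWithin_of_forall fun h (hh : 0 < h) => lt_add_of_pos_right t hh)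
  exact (continuous_const_add t).tendsto' 0 t (add_zero t) |>.mono_left nhdsWithin_le_nhds

theorem tendsto_const_sub_nhdsGT_zero : Tendsto (t - ·) (𝓝[>] 0) (𝓝[<] t) := by
  refine tendsto_nhdsWithin_of_tendsto_nhds_of_eventually_within _ ?_
    (eventually_nhdsWithin_of_forall fun h (hh : 0 < h) => sub_lt_self t hh)
  exact (continuous_sub_left t).tendsto' 0 t (sub_zero t) |>.mono_left nhdsWithin_le_nhds

end OrderedGroup

namespace IsGraftingData

variable {s₀ s₁ : ℝ} {φ : ℝ → ℝ} {Xp Xm : Set ℝ} {δp δm : ℝ → ℝ} {t : ℝ}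

theorem tendsto_nhdsGT (hφ : IsGraftingData s₀ s₁ φ Xp Xm δp δm) (ht : t ∈ Ico 0 s₀) :
    Tendsto φ (𝓝[>] t)
      (𝓝 (t + ∑' x : ↥(Xp ∩ Iic t), δp x + ∑' x : ↥(Xm ∩ Iic t), δm x)) := by
  obtain ⟨-, -, -, -, -, -, hsp, hsm, hφ_eq, -⟩ := hφ
  have hlim := ((tendsto_nhdsWithin_of_tendsto_nhds tendsto_id).add
    (tendsto_tsum_inter_of_eventually_mem_iff (summable_norm_iff.mpr hsp)
      (eventually_lt_iff_le_nhdsGT t))).add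
    (tendsto_tsum_inter_of_eventually_mem_iff (summable_norm_iff.mpr hsm)
      (eventually_le_iff_le_nhdsGT t))
  refine hlim.congr' ?_
  filter_upwards [Ioo_mem_nhdsGT ht.2] with u hu
  exact (hφ_eq u ⟨ht.1.trans hu.1.le, hu.2.le⟩).symm

theorem tendsto_nhdsLT (hφ : IsGraftingData s₀ s₁ φ Xp Xm δp δm) (ht : t ∈ Ioc 0 s₀) :
    Tendsto φ (𝓝[<] t)
      (𝓝 (t + ∑' x : ↥(Xp ∩ Iio t), δp x + ∑' x : ↥(Xm ∩ Iio t), δm x)) := by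
  obtain ⟨-, -, -, -, -, -, hsp, hsm, hφ_eq, -⟩ := hφ
  have hlim := ((tendsto_nhdsWithin_of_tendsto_nhds tendsto_id).add
    (tendsto_tsum_inter_of_eventually_mem_iff (summable_norm_iff.mpr hsp)
      (eventually_lt_iff_lt_nhdsLT t))).add
    (tendsto_tsum_inter_of_eventually_mem_iff (summable_norm_iff.mpr hsm)
      (eventually_le_iff_lt_nhdsLT t))
  refine hlim.congr' ?_
  filter_upwards [Ioo_mem_nhdsLT ht.1] with u hu
  exact (hφ_eq u ⟨hu.1.le, hu.2.le.trans ht.2⟩).symm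

theorem tendsto_sub_nhdsGT (hφ : IsGraftingData s₀ s₁ φ Xp Xm δp δm) (ht : t ∈ Ico 0 s₀) :
    Tendsto (fun u => φ u - φ t) (𝓝[>] t) (𝓝 (Xp.indicator δp t)) := by
  convert (hφ.tendsto_nhdsGT ht).sub_const (φ t) using 2
  obtain ⟨-, -, -, -, -, -, hsp, -, hφ_eq, -⟩ := hφ
  rw [← tsum_inter_Iic_sub_tsum_inter_Iio (summable_norm_iff.mpr hsp),
    hφ_eq t (Ico_subset_Icc_self ht)]
  ring

theorem tendsto_sub_nhdsLT (hφ : IsGraftingData s₀ s₁ φ Xp Xm δp δm) (ht : t ∈ Ioc 0 s₀) :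
    Tendsto (fun u => φ t - φ u) (𝓝[<] t) (𝓝 (Xm.indicator δm t)) := by
  convert (hφ.tendsto_nhdsLT ht).const_sub (φ t) using 2
  obtain ⟨-, -, -, -, -, -, -, hsm, hφ_eq, -⟩ := hφ
  rw [← tsum_inter_Iic_sub_tsum_inter_Iio (summable_norm_iff.mpr hsm),
    hφ_eq t (Ioc_subset_Icc_self ht)]
  ring

end IsGraftingData

theorem mem_iff_pos_indicator {α M : Type*} [Zero M] [Preorder M] {X : Set α} {δ : α → M}
    (hδ : ∀ x ∈ X, 0 < δ x) (t : α) : t ∈ X ↔ 0 < X.indicator δ t := by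
  by_cases ht : t ∈ X <;> simp [ht, hδ]

/-- For a grafting function `φ` with data `(X±, δ±)` and `t ∈ (0, s₀)`: `t ∈ X⁺` iff the
right jump `ω⁺(t) = lim_{h→0⁺} (φ(t+h) − φ(t))` is positive, in which case `δ⁺(t) = ω⁺(t)`;
and `t ∈ X⁻` iff the left jump `ω⁻(t) = lim_{h→0⁺} (φ(t) − φ(t−h))` is positive, in which
case `δ⁻(t) = ω⁻(t)`. Hence the data is determined by `φ`. -/
theorem graftingData_jump_characterization
    (s₀ s₁ : ℝ) (φ : ℝ → ℝ) (Xp Xm : Set ℝ) (δp δm : ℝ → ℝ)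
    (hdata : IsGraftingData s₀ s₁ φ Xp Xm δp δm)
    (t : ℝ) (ht : t ∈ Ioo 0 s₀) (ωp ωm : ℝ)
    (hωp : Tendsto (fun h : ℝ => φ (t + h) - φ t) (nhdsWithin 0 (Ioi 0)) (nhds ωp))
    (hωm : Tendsto (fun h : ℝ => φ t - φ (t - h)) (nhdsWithin 0 (Ioi 0)) (nhds ωm)) :
    ((t ∈ Xp ↔ 0 < ωp) ∧ (t ∈ Xp → δp t = ωp)) ∧
      ((t ∈ Xm ↔ 0 < ωm) ∧ (t ∈ Xm → δm t = ωm)) := by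
  have hp : ωp = Xp.indicator δp t := tendsto_nhds_unique hωp
    ((hdata.tendsto_sub_nhdsGT (Ioo_subset_Ico_self ht)).comp (tendsto_const_add_nhdsGT_zero t))
  have hm : ωm = Xm.indicator δm t := tendsto_nhds_unique hωm
    ((hdata.tendsto_sub_nhdsLT (Ioo_subset_Ioc_self ht)).comp (tendsto_const_sub_nhdsGT_zero t))
  obtain ⟨-, -, -, -, hδp, hδm, -⟩ := hdata
  subst hp hm
  exact ⟨⟨mem_iff_pos_indicator hδp t, fun h => (indicator_of_mem h δp).symm⟩,
    ⟨mem_iff_pos_indicator hδm t, fun h => (indicator_of_mem h δm).symm⟩⟩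
end

section
/- Let f(t) = arcsin(cos ρ_0 · sin t) for a fixed ρ_0 with 0 < ρ_0 ≤ π/2. If λ_2, λ_4, λ_6 ∈ [0, π/2] satisfy λ_2 + λ_4 + λ_6 = π, then f(λ_2) + f(λ_4) + f(λ_6) ≥ π − 2ρ_0. -/
open Real Set

/-!
For `0 ≤ c < 1` the map `t ↦ arcsin (c sin t)` is concave on `[0, π/2]` (its derivative
`c cos t / √(1 - c² sin² t)` decreases there) and vanishes at `0`, so it lies above its chord:
`arcsin (cos ρ₀ sin t) ≥ (2t/π) (π/2 - ρ₀)`. Summing over `λ₂ + λ₄ + λ₆ = π` gives `π - 2ρ₀`.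
-/

lemma hasDerivAt_arcsin_mul_sin {c : ℝ} (hc : |c| < 1) (t : ℝ) :
    HasDerivAt (fun t => arcsin (c * sin t)) (c * cos t / √(1 - (c * sin t) ^ 2)) t := by
  have hcs : |c * sin t| < 1 := by
    rw [abs_mul]
    exact (mul_le_of_le_one_right (abs_nonneg c) (abs_sin_le_one t)).trans_lt hc
  rw [div_eq_inv_mul, ← one_div]
  exact (hasDerivAt_arcsin (abs_lt.1 hcs).1.ne' (abs_lt.1 hcs).2.ne).comp t
    ((hasDerivAt_sin t).const_mul c)

lemma antitoneOn_mul_cos_div_sqrt {c : ℝ} (hc₀ : 0 ≤ c) (hc₁ : c < 1) :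
    AntitoneOn (fun t => c * cos t / √(1 - (c * sin t) ^ 2)) (Icc 0 (π / 2)) := by
  intro x hx y hy hxy
  have hsx : 0 ≤ sin x := sin_nonneg_of_nonneg_of_le_pi hx.1 (by linarith [hx.2, pi_pos])
  have hsxy : sin x ≤ sin y :=
    sin_le_sin_of_le_of_le_pi_div_two (by linarith [hx.1, pi_pos]) hy.2 hxy
  have hcx : 0 ≤ cos x := cos_nonneg_of_mem_Icc ⟨by linarith [hx.1, pi_pos], hx.2⟩
  have hcy : 0 ≤ cos y := cos_nonneg_of_mem_Icc ⟨by linarith [hy.1, pi_pos], hy.2⟩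
  have hA : ∀ t, 0 < 1 - (c * sin t) ^ 2 := fun t => by
    nlinarith [mul_le_mul_of_nonneg_left (sin_sq_le_one t) (sq_nonneg c)]
  have hAx := hA x
  have hAy := hA y
  dsimp only
  rw [div_le_div_iff₀ (sqrt_pos.2 hAy) (sqrt_pos.2 hAx)]
  refine (pow_le_pow_iff_left₀ (by positivity) (by positivity) two_ne_zero).1 ?_
  rw [mul_pow (c * cos y), mul_pow (c * cos x), sq_sqrt hAx.le, sq_sqrt hAy.le]
  have hdiff : (c * cos x) ^ 2 * (1 - (c * sin y) ^ 2) - (c * cos y) ^ 2 * (1 - (c * sin x) ^ 2)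
      = c ^ 2 * (1 - c ^ 2) * (sin y ^ 2 - sin x ^ 2) := by
    linear_combination (c ^ 2 * (1 - c ^ 2 * sin y ^ 2)) * sin_sq_add_cos_sq x
      - (c ^ 2 * (1 - c ^ 2 * sin x ^ 2)) * sin_sq_add_cos_sq y
  have hsq : sin x ^ 2 ≤ sin y ^ 2 := pow_le_pow_left₀ hsx hsxy 2
  nlinarith [mul_nonneg (mul_nonneg (sq_nonneg c) (by nlinarith : 0 ≤ 1 - c ^ 2))
    (sub_nonneg.2 hsq)]

lemma concaveOn_arcsin_mul_sin {c : ℝ} (hc₀ : 0 ≤ c) (hc₁ : c < 1) :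
    ConcaveOn ℝ (Icc 0 (π / 2)) (fun t => arcsin (c * sin t)) := by
  have hc : |c| < 1 := abs_lt.2 ⟨by linarith, hc₁⟩
  have hd := hasDerivAt_arcsin_mul_sin hc
  refine AntitoneOn.concaveOn_of_deriv (convex_Icc _ _)
    (fun t _ => (hd t).continuousAt.continuousWithinAt)
    (fun t _ => (hd t).differentiableAt.differentiableWithinAt) ?_
  rw [interior_Icc, show deriv _ = _ from funext fun t => (hd t).deriv]
  exact (antitoneOn_mul_cos_div_sqrt hc₀ hc₁).mono Ioo_subset_Icc_self

lemma ConcaveOn.div_mul_le_of_map_zero {f : ℝ → ℝ} {a t : ℝ} (hf : ConcaveOn ℝ (Icc 0 a) f)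
    (hf₀ : f 0 = 0) (ht : t ∈ Icc 0 a) : t / a * f a ≤ f t := by
  have ha : 0 ≤ a := ht.1.trans ht.2
  rcases ha.eq_or_lt with rfl | ha
  · simp [le_antisymm ht.2 ht.1, hf₀]
  have hθ : t / a ≤ 1 := (div_le_one ha).2 ht.2
  have h := hf.2 (left_mem_Icc.2 ha.le) (right_mem_Icc.2 ha.le) (sub_nonneg.2 hθ)
    (div_nonneg ht.1 ha.le) (sub_add_cancel 1 (t / a))
  simpa [hf₀, div_mul_cancel₀ t ha.ne'] using h

/-- If `λ₂ + λ₄ + λ₆ = π` with each `λᵢ ∈ [0, π/2]` and `0 < ρ₀ ≤ π/2`, then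
`arcsin(cos ρ₀ sin λ₂) + arcsin(cos ρ₀ sin λ₄) + arcsin(cos ρ₀ sin λ₆) ≥ π − 2ρ₀`. -/
theorem arcsin_cos_sin_sum_ge
    (ρ₀ l₂ l₄ l₆ : ℝ)
    (hρ₀ : 0 < ρ₀) (hρ₀' : ρ₀ ≤ π / 2)
    (h₂ : l₂ ∈ Set.Icc 0 (π / 2)) (h₄ : l₄ ∈ Set.Icc 0 (π / 2))
    (h₆ : l₆ ∈ Set.Icc 0 (π / 2))
    (hsum : l₂ + l₄ + l₆ = π) :
    π - 2 * ρ₀ ≤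
      arcsin (cos ρ₀ * sin l₂) + arcsin (cos ρ₀ * sin l₄) + arcsin (cos ρ₀ * sin l₆) := by
  have hc₀ : 0 ≤ cos ρ₀ := cos_nonneg_of_mem_Icc ⟨by linarith [pi_pos], hρ₀'⟩
  have hc₁ : cos ρ₀ < 1 := by
    simpa using cos_lt_cos_of_nonneg_of_le_pi_div_two le_rfl hρ₀' hρ₀
  have hf := concaveOn_arcsin_mul_sin hc₀ hc₁
  have hf₀ : arcsin (cos ρ₀ * sin 0) = 0 := by simp
  have hend : arcsin (cos ρ₀ * sin (π / 2)) = π / 2 - ρ₀ := by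
    rw [sin_pi_div_two, mul_one, arcsin_eq_pi_div_two_sub_arccos,
      arccos_cos hρ₀.le (by linarith [pi_pos])]
  have hchord : ∀ l ∈ Icc 0 (π / 2), l / (π / 2) * (π / 2 - ρ₀) ≤ arcsin (cos ρ₀ * sin l) :=
    fun l hl => hend ▸ hf.div_mul_le_of_map_zero hf₀ hl
  calc π - 2 * ρ₀
      = l₂ / (π / 2) * (π / 2 - ρ₀) + l₄ / (π / 2) * (π / 2 - ρ₀)
        + l₆ / (π / 2) * (π / 2 - ρ₀) := by
        field_simp
        linear_combination (-(π - 2 * ρ₀)) * hsum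
    _ ≤ _ := add_le_add (add_le_add (hchord l₂ h₂) (hchord l₄ h₄)) (hchord l₆ h₆)
end
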